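/- arXiv:2405.08639 — 3 statements merged into one kernel-verified Lean document; each statement's English description precedes it below -/
import Mathlib

section
/- Let A be a type and let E₀, E₁ be finite subsets of ℕ. Let p be a finite partial function from ℕ × A to Bool, and let g, h be finite partial functions from ℕ × ℕ to Bool such that E₁ × E₀ ⊆ dom(g) ∩ dom(h) and g(k, m) = h(k, m) for all (k, m) ∈ E₁ × E₀. Then there exist finitary permutations σ and π of ℕ such that σ fixes E₁ pointwise, π fixes E₀ pointwise, the finite partial function p^π with domain {(π n, a) : (n, a) ∈ dom(p)} defined by p^π(π n, a) = p(n, a) is compatible with p, and the finite partial function g^{σ,π} with domain {(σ k, π m) : (k, m) ∈ dom(g)} defined by g^{σ,π}(σ k, π m) = g(k, m) is compatible with h. -/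
/-- Two partial (`Option`-valued) functions are *compatible* if they agree
wherever both are defined. -/
def Compatible {α β : Type*} (p q : α → Option β) : Prop :=
  ∀ x, p x ≠ none → q x ≠ none → p x = q x

/-- Swap each `s ∈ S` with `s + N`, fixing everything else. -/
def shiftFun (S : Finset ℕ) (N : ℕ) (n : ℕ) : ℕ :=
  if n ∈ S then n + N else if N ≤ n ∧ n - N ∈ S then n - N else n

lemma shiftFun_involutive (S : Finset ℕ) (N : ℕ) (hS : ∀ s ∈ S, s < N) :
    Function.Involutive (shiftFun S N) := by
  intro n
  unfold shiftFun
  by_cases h1 : n ∈ S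
  · rw [if_pos h1]
    have h2 : n + N ∉ S := fun h => by have := hS _ h; omega
    rw [if_neg h2, if_pos ⟨by omega, by simpa using h1⟩]
    omega
  · rw [if_neg h1]
    by_cases h2 : N ≤ n ∧ n - N ∈ S
    · rw [if_pos h2, if_pos h2.2]; omega
    · rw [if_neg h2, if_neg h1, if_neg h2]

lemma shiftFun_fixed {S : Finset ℕ} {N n : ℕ} (hnS : n ∉ S) (hlt : n < N) :
    shiftFun S N n = n := by
  unfold shiftFun
  rw [if_neg hnS, if_neg (by omega)]

lemma shiftFun_mem {S : Finset ℕ} {N n : ℕ} (hnS : n ∈ S) :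
    shiftFun S N n = n + N := by
  unfold shiftFun; rw [if_pos hnS]

lemma shiftFun_support (S : Finset ℕ) (N : ℕ) :
    {n | shiftFun S N n ≠ n} ⊆ ↑(S ∪ S.image (· + N)) := by
  intro n hn
  simp only [Set.mem_setOf_eq, shiftFun] at hn
  by_cases h1 : n ∈ S
  · simp [h1]
  · rw [if_neg h1] at hn
    by_cases h2 : N ≤ n ∧ n - N ∈ S
    · simp only [Finset.coe_union, Set.mem_union, Finset.coe_image, Set.mem_image,
        Finset.mem_coe]
      right
      exact ⟨n - N, h2.2, by omega⟩
    · rw [if_neg h2] at hn; exact absurd rfl hn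

/-- The combinatorial core of upwards homogeneity of Monro's iteration:
given finite `E₀ E₁ ⊆ ℕ`, a finite partial function `p : ℕ × A ⇀ Bool`, and
finite partial functions `g h : ℕ × ℕ ⇀ Bool` with `E₁ × E₀ ⊆ dom g ∩ dom h`
on which `g` and `h` agree, there are finitary permutations `σ ∈ fix(E₁)` and
`π ∈ fix(E₀)` such that `p^π` (defined by `p^π (π n, a) = p (n, a)`) is
compatible with `p` and `g^{σ,π}` (defined by `g^{σ,π} (σ k, π m) = g (k, m)`)
is compatible with `h`. -/
theorem monro_upwards_homogeneity_core {A : Type*} (E₀ E₁ : Finset ℕ)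
    (p : ℕ × A → Option Bool) (hp : {x | p x ≠ none}.Finite)
    (g h : ℕ × ℕ → Option Bool)
    (hg : {x | g x ≠ none}.Finite) (hh : {x | h x ≠ none}.Finite)
    (hdom : ∀ k ∈ E₁, ∀ m ∈ E₀, g (k, m) ≠ none ∧ h (k, m) ≠ none)
    (hagree : ∀ k ∈ E₁, ∀ m ∈ E₀, g (k, m) = h (k, m)) :
    ∃ σ π : Equiv.Perm ℕ,
      {n | σ n ≠ n}.Finite ∧ {n | π n ≠ n}.Finite ∧
      (∀ k ∈ E₁, σ k = k) ∧ (∀ m ∈ E₀, π m = m) ∧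
      Compatible (fun x : ℕ × A => p (π.symm x.1, x.2)) p ∧
      Compatible (fun x : ℕ × ℕ => g (σ.symm x.1, π.symm x.2)) h := by
  classical
  set Dp := hp.toFinset with hDp
  set Dg := hg.toFinset with hDg
  set Dh := hh.toFinset with hDh
  set Rπ : Finset ℕ := E₀ ∪ Dp.image Prod.fst ∪ Dg.image Prod.snd ∪ Dh.image Prod.snd
    with hRπ
  set Rσ : Finset ℕ := E₁ ∪ Dg.image Prod.fst ∪ Dh.image Prod.fst with hRσ
  set N : ℕ := (Rπ ∪ Rσ).sup id + 1 with hN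
  have hlt : ∀ n ∈ Rπ ∪ Rσ, n < N := fun n hn =>
    Nat.lt_succ_of_le (Finset.le_sup (f := id) hn)
  have hltπ : ∀ n ∈ Rπ, n < N := fun n hn => hlt n (Finset.mem_union_left _ hn)
  have hltσ : ∀ n ∈ Rσ, n < N := fun n hn => hlt n (Finset.mem_union_right _ hn)
  set Sπ : Finset ℕ := Rπ \ E₀ with hSπ
  set Sσ : Finset ℕ := Rσ \ E₁ with hSσ
  have hSπlt : ∀ s ∈ Sπ, s < N := fun s hs => hltπ s (Finset.mem_sdiff.mp hs).1
  have hSσlt : ∀ s ∈ Sσ, s < N := fun s hs => hltσ s (Finset.mem_sdiff.mp hs).1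
  have hπinv := shiftFun_involutive Sπ N hSπlt
  have hσinv := shiftFun_involutive Sσ N hSσlt
  refine ⟨(Function.Involutive.toPerm _ hσinv), (Function.Involutive.toPerm _ hπinv), ?_, ?_, ?_, ?_, ?_, ?_⟩
  · exact Set.Finite.subset (Finset.finite_toSet _) (shiftFun_support Sσ N)
  · exact Set.Finite.subset (Finset.finite_toSet _) (shiftFun_support Sπ N)
  · intro k hk
    have hkR : k ∈ Rσ := by
      rw [hRσ]; exact Finset.mem_union_left _ (Finset.mem_union_left _ hk)
    exact shiftFun_fixed (fun hmem => (Finset.mem_sdiff.mp hmem).2 hk) (hltσ k hkR)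
  · intro m hm
    have hmR : m ∈ Rπ := by
      rw [hRπ]
      exact Finset.mem_union_left _ (Finset.mem_union_left _ (Finset.mem_union_left _ hm))
    exact shiftFun_fixed (fun hmem => (Finset.mem_sdiff.mp hmem).2 hm) (hltπ m hmR)
  · -- Compatibility of p^π with p
    rintro ⟨n, a⟩ h1 h2
    simp only at h1 h2 ⊢
    have hπsymm : (Function.Involutive.toPerm _ hπinv).symm n = shiftFun Sπ N n := rfl
    rw [hπsymm] at h1 ⊢
    -- n ∈ Rπ since p (n, a) ≠ none
    have hnR : n ∈ Rπ := by
      rw [hRπ]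
      refine Finset.mem_union_left _ (Finset.mem_union_left _ (Finset.mem_union_right _ ?_))
      exact Finset.mem_image.mpr ⟨(n, a), hp.mem_toFinset.mpr h2, rfl⟩
    -- shiftFun Sπ N n ∈ Rπ since p (shiftFun Sπ N n, a) ≠ none
    have hfR : shiftFun Sπ N n ∈ Rπ := by
      rw [hRπ]
      refine Finset.mem_union_left _ (Finset.mem_union_left _ (Finset.mem_union_right _ ?_))
      exact Finset.mem_image.mpr ⟨(shiftFun Sπ N n, a), hp.mem_toFinset.mpr h1, rfl⟩
    have hnS : n ∉ Sπ := by
      intro hmem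
      have := shiftFun_mem (N := N) hmem
      have := hltπ _ hfR
      omega
    rw [shiftFun_fixed hnS (hltπ n hnR)]
  · -- Compatibility of g^{σ,π} with h
    rintro ⟨k, m⟩ h1 h2
    simp only at h1 h2 ⊢
    have hσsymm : (Function.Involutive.toPerm _ hσinv).symm k = shiftFun Sσ N k := rfl
    have hπsymm : (Function.Involutive.toPerm _ hπinv).symm m = shiftFun Sπ N m := rfl
    rw [hσsymm, hπsymm] at h1 ⊢
    have hkR : k ∈ Rσ := by
      rw [hRσ]
      refine Finset.mem_union_right _ ?_
      exact Finset.mem_image.mpr ⟨(k, m), hh.mem_toFinset.mpr h2, rfl⟩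
    have hmR : m ∈ Rπ := by
      rw [hRπ]
      refine Finset.mem_union_right _ ?_
      exact Finset.mem_image.mpr ⟨(k, m), hh.mem_toFinset.mpr h2, rfl⟩
    have hfkR : shiftFun Sσ N k ∈ Rσ := by
      rw [hRσ]
      refine Finset.mem_union_left _ (Finset.mem_union_right _ ?_)
      exact Finset.mem_image.mpr
        ⟨(shiftFun Sσ N k, shiftFun Sπ N m), hg.mem_toFinset.mpr h1, rfl⟩
    have hfmR : shiftFun Sπ N m ∈ Rπ := by
      rw [hRπ]
      refine Finset.mem_union_left _ (Finset.mem_union_right _ ?_)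
      exact Finset.mem_image.mpr
        ⟨(shiftFun Sσ N k, shiftFun Sπ N m), hg.mem_toFinset.mpr h1, rfl⟩
    have hkS : k ∉ Sσ := by
      intro hmem
      have := shiftFun_mem (N := N) hmem
      have := hltσ _ hfkR
      omega
    have hmS : m ∉ Sπ := by
      intro hmem
      have := shiftFun_mem (N := N) hmem
      have := hltπ _ hfmR
      omega
    have hkE : k ∈ E₁ := by
      by_contra hkE
      exact hkS (Finset.mem_sdiff.mpr ⟨hkR, hkE⟩)
    have hmE : m ∈ E₀ := by
      by_contra hmE
      exact hmS (Finset.mem_sdiff.mpr ⟨hmR, hmE⟩)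
    rw [shiftFun_fixed hkS (hltσ k hkR), shiftFun_fixed hmS (hltπ m hmR)]
    exact hagree k hkE m hmE
end

section
/- Let p be a finite partial function from ℕ × ℕ to Bool, let E be a finite subset of ℕ, and let m ∈ ℕ with m ∉ E. Then there exists m' ∈ ℕ with m' ∉ E and m' ≠ m such that no pair with first coordinate m' lies in dom(p), and, writing π for the transposition of ℕ swapping m and m' (which fixes E pointwise), the finite partial function p^π with domain {(π n, k) : (n, k) ∈ dom(p)} defined by p^π(π n, k) = p(n, k) is compatible with p. -/
/-- The combinatorial core of the density argument showing that the set of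
Cohen reals in Cohen's first model is Dedekind-finite: for a finite partial
function `p : ℕ × ℕ ⇀ Bool`, a finite `E ⊆ ℕ`, and `m ∉ E`, there is
`m' ∉ E` with `m' ≠ m` such that no pair with first coordinate `m'` is in
`dom p`, the transposition `π = (m m')` fixes `E` pointwise, and `p^π`
(defined by `p^π (π n, k) = p (n, k)`) is compatible with `p`. -/
theorem cohen_dedekind_finite_core
    (p : ℕ × ℕ → Option Bool) (hp : {x | p x ≠ none}.Finite)
    (E : Finset ℕ) (m : ℕ) (hm : m ∉ E) :
    ∃ m' : ℕ, m' ∉ E ∧ m' ≠ m ∧ (∀ k, p (m', k) = none) ∧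
      (∀ x ∈ E, Equiv.swap m m' x = x) ∧
      Compatible (fun x : ℕ × ℕ => p ((Equiv.swap m m').symm x.1, x.2)) p := by
  classical
  set S : Finset ℕ := (hp.toFinset.image Prod.fst) ∪ E ∪ {m} with hS
  set m' : ℕ := S.sup id + 1 with hm'
  have hnot : m' ∉ S := by
    intro h
    have := Finset.le_sup (f := id) h
    simp only [id] at this
    omega
  have hE : m' ∉ E := fun h => hnot (by simp [hS, Finset.mem_union, h])
  have hne : m' ≠ m := by
    intro h
    exact hnot (by simp [hS, h])
  have hdom : ∀ k, p (m', k) = none := by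
    intro k
    by_contra h
    apply hnot
    simp only [hS, Finset.mem_union]
    left; left
    exact Finset.mem_image.2 ⟨(m', k), hp.mem_toFinset.2 h, rfl⟩
  refine ⟨m', hE, hne, hdom, ?_, ?_⟩
  · intro x hx
    apply Equiv.swap_apply_of_ne_of_ne
    · exact fun h => hm (h ▸ hx)
    · exact fun h => hE (h ▸ hx)
  · intro x h1 h2
    simp only [Equiv.symm_swap] at h1 ⊢
    rcases eq_or_ne x.1 m with h | h
    · exfalso
      apply h1
      rw [h, Equiv.swap_apply_left]
      exact hdom x.2
    rcases eq_or_ne x.1 m' with h' | h'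
    · exfalso
      apply h2
      rw [← hdom x.2, ← h']
    · rw [Equiv.swap_apply_of_ne_of_ne h h']
end

section
/- Let I be a type and let E, F, F' be finite subsets of I × ℕ with E ⊆ F and E ⊆ F'. Then there exists a family (h_i)_{i ∈ I} of finitary permutations of ℕ, with h_i equal to the identity for all but finitely many i ∈ I, such that h_i(n) = n whenever (i, n) ∈ E, and {(i, h_i(n)) : (i, n) ∈ F} ∩ F' = E. -/
/-- Columnwise separation lemma for the wreath product `{id} ≀ S_{<ω}` acting on
`I × ℕ`: if `E ⊆ F` and `E ⊆ F'` are finite subsets of `I × ℕ`, there is a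
family `(h_i)_{i ∈ I}` of finitary permutations of `ℕ`, the identity for all
but finitely many `i`, fixing `E` columnwise, such that the image of `F` under
`(i, n) ↦ (i, h_i n)` meets `F'` exactly in `E`. -/
theorem wreath_columnwise_separation {I : Type*}
    (E F F' : Finset (I × ℕ)) (hEF : E ⊆ F) (hEF' : E ⊆ F') :
    ∃ h : I → Equiv.Perm ℕ,
      {i | h i ≠ 1}.Finite ∧
      (∀ i, {n | h i n ≠ n}.Finite) ∧
      (∀ i n, (i, n) ∈ E → h i n = n) ∧
      ((fun x : I × ℕ => (x.1, h x.1 x.2)) '' ↑F) ∩ ↑F' = (↑E : Set (I × ℕ)) := by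
  classical
  set M : ℕ := (F ∪ F').sup Prod.snd + 1 with hMdef
  have hFM : ∀ p : I × ℕ, p ∈ F → p.2 < M := fun p hp =>
    Nat.lt_succ_of_le (Finset.le_sup (Finset.mem_union_left _ hp))
  have hF'M : ∀ p : I × ℕ, p ∈ F' → p.2 < M := fun p hp =>
    Nat.lt_succ_of_le (Finset.le_sup (Finset.mem_union_right _ hp))
  set S : I → ℕ → Prop := fun i n => (i, n) ∈ F ∧ (i, n) ∉ E with hSdef
  set f : I → ℕ → ℕ := fun i n =>
    if S i n then n + M else if M ≤ n ∧ S i (n - M) then n - M else n with hfdef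
  have hinv : ∀ i, Function.Involutive (f i) := by
    intro i n
    by_cases h1 : S i n
    · have hlt : n < M := hFM _ h1.1
      have hnS : ¬ S i (n + M) := fun h => absurd (hFM _ h.1) (by omega)
      have h2 : M ≤ n + M ∧ S i (n + M - M) := by
        refine ⟨by omega, ?_⟩
        simpa [Nat.add_sub_cancel] using h1
      simp only [hfdef, if_pos h1, if_neg hnS, Nat.add_sub_cancel]
      rw [if_pos ⟨by omega, h1⟩]
    · by_cases h2 : M ≤ n ∧ S i (n - M)
      · simp only [hfdef, if_neg h1, if_pos h2, if_pos h2.2]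
        omega
      · simp only [hfdef, if_neg h1, if_neg h2]
  refine ⟨fun i => (hinv i).toPerm, ?_, ?_, ?_, ?_⟩
  · apply Set.Finite.subset (F.image Prod.fst).finite_toSet
    intro i hi
    by_contra hin
    apply hi
    have hnoF : ∀ n, (i, n) ∉ F := by
      intro n hn
      exact hin (Finset.mem_coe.2 (Finset.mem_image.2 ⟨(i, n), hn, rfl⟩))
    have : ∀ n, f i n = n := by
      intro n
      have h1 : ¬ S i n := fun h => hnoF n h.1
      have h2 : ¬ (M ≤ n ∧ S i (n - M)) := fun h => hnoF _ h.2.1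
      simp only [hfdef, if_neg h1, if_neg h2]
    exact Equiv.ext fun n => this n
  · intro i
    apply Set.Finite.subset ((F.image Prod.snd ∪ (F.image Prod.snd).image (· + M)).finite_toSet)
    intro n hn
    simp only [Set.mem_setOf_eq] at hn
    have : f i n ≠ n := hn
    by_cases h1 : S i n
    · exact Finset.mem_coe.2 (Finset.mem_union_left _
        (Finset.mem_image.2 ⟨(i, n), h1.1, rfl⟩))
    · by_cases h2 : M ≤ n ∧ S i (n - M)
      · refine Finset.mem_coe.2 (Finset.mem_union_right _ (Finset.mem_image.2
          ⟨n - M, Finset.mem_image.2 ⟨(i, n - M), h2.2.1, rfl⟩, by omega⟩))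
      · exact absurd (by simp only [hfdef, if_neg h1, if_neg h2]) this
  · intro i n hE
    have h1 : ¬ S i n := fun h => h.2 hE
    have h2 : ¬ (M ≤ n ∧ S i (n - M)) := fun h => absurd (hFM _ (hEF hE)) (by omega)
    show f i n = n
    simp only [hfdef, if_neg h1, if_neg h2]
  · ext p
    constructor
    · rintro ⟨⟨q, hqF, rfl⟩, hp'⟩
      have hqF' : q ∈ F := hqF
      by_cases hqE : q ∈ E
      · have h1 : ¬ S q.1 q.2 := fun h => h.2 hqE
        have h2 : ¬ (M ≤ q.2 ∧ S q.1 (q.2 - M)) := fun h => absurd (hFM _ hqF') (by omega)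
        have : f q.1 q.2 = q.2 := by simp only [hfdef, if_neg h1, if_neg h2]
        simp only [Function.Involutive.coe_toPerm, this]
        simpa using hqE
      · exfalso
        have h1 : S q.1 q.2 := ⟨hqF', hqE⟩
        have : f q.1 q.2 = q.2 + M := by simp only [hfdef, if_pos h1]
        have hlt := hF'M _ (Finset.mem_coe.1 hp')
        simp only [Function.Involutive.coe_toPerm, this] at hlt
        omega
    · intro hpE
      have hpE' : p ∈ E := hpE
      have h1 : ¬ S p.1 p.2 := fun h => h.2 hpE'
      have h2 : ¬ (M ≤ p.2 ∧ S p.1 (p.2 - M)) := fun h =>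
        absurd (hFM _ (hEF hpE')) (by omega)
      have hfix : f p.1 p.2 = p.2 := by simp only [hfdef, if_neg h1, if_neg h2]
      refine ⟨⟨p, by simpa using hEF hpE', ?_⟩, by simpa using hEF' hpE'⟩
      simp only [Function.Involutive.coe_toPerm, hfix]
end
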